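/- (Second derivative bound for the eigenvalue.) Let d ≥ 1, λ > 0, M₁ ≥ 0, M₂ ≥ 0. Let H : ℝ → Matrix (Fin d) (Fin d) ℂ be twice differentiable on [0,1] with each H(s) Hermitian, ‖H'(s)‖ ≤ M₁ and ‖H''(s)‖ ≤ M₂ for all s ∈ [0,1]. Let Ψ : ℝ → EuclideanSpace ℂ (Fin d) be twice differentiable on [0,1] with ‖Ψ(s)‖ = 1 and ⟨Ψ'(s), Ψ(s)⟩ = 0 for all s ∈ [0,1], and let γ : ℝ → ℝ be twice differentiable on [0,1], such that H(s) Ψ(s) = γ(s) Ψ(s) for all s ∈ [0,1]. Assume that for every s ∈ [0,1] the eigenspace of H(s) for the eigenvalue γ(s) is one-dimensional (spanned by Ψ(s)) and every eigenvalue μ ≠ γ(s) of H(s) satisfies |μ − γ(s)| ≥ λ. Then for every s ∈ [0,1], |γ''(s)| ≤ M₂ + 4·M₁²/λ. -/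

import Mathlib

/-!
Differentiating `H Ψ = γ Ψ` and pairing with the unit vector `Ψ` gives the Hellmann–Feynman
formula `γ' = ⟪Ψ, H' Ψ⟫` (the term `⟪Ψ, H Ψ'⟫ = γ ⟪Ψ, Ψ'⟫` cancels because `H` is Hermitian), and
differentiating once more, `γ'' = ⟪Ψ', H' Ψ⟫ + ⟪Ψ, H'' Ψ⟫ + ⟪Ψ, H' Ψ'⟫`, so
`|γ''| ≤ M₂ + 2 M₁ ‖Ψ'‖`. The differentiated eigen-equation also reads
`(H - γ) Ψ' = γ' Ψ - H' Ψ`, whose norm is at most `2 M₁`; since `Ψ'` is orthogonal to the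
eigenspace `ℂ Ψ`, the spectral gap gives `λ ‖Ψ'‖ ≤ 2 M₁`.
-/

open scoped InnerProductSpace

/-- The continuous linear map on Euclidean space associated to a matrix;
its operator norm is the operator norm induced by the Euclidean norm. -/
noncomputable def opCLM {d : ℕ} (A : Matrix (Fin d) (Fin d) ℂ) :
    EuclideanSpace ℂ (Fin d) →L[ℂ] EuclideanSpace ℂ (Fin d) :=
  Matrix.toEuclideanCLM (𝕜 := ℂ) A

open Set Module.End

theorem HasDerivAt.eq_of_eqOn_Icc {F : Type*} [NormedAddCommGroup F] [NormedSpace ℝ F]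
    {f g : ℝ → F} {f' g' : F} {a b x : ℝ} (hab : a < b) (hx : x ∈ Icc a b)
    (hfg : EqOn f g (Icc a b)) (hf : HasDerivAt f f' x) (hg : HasDerivAt g g' x) : f' = g' :=
  (uniqueDiffOn_Icc hab x hx).eq_deriv _ hf.hasDerivWithinAt
    (hg.hasDerivWithinAt.congr hfg (hfg hx))

section Calculus

variable {𝕜 E F : Type*} [NontriviallyNormedField 𝕜] [NormedAlgebra ℝ 𝕜]
  [NormedAddCommGroup E] [NormedSpace 𝕜 E] [NormedSpace ℝ E] [IsScalarTower ℝ 𝕜 E]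
  [NormedAddCommGroup F] [NormedSpace 𝕜 F] [NormedSpace ℝ F] [IsScalarTower ℝ 𝕜 F]

theorem HasDerivAt.clm_apply_restrictScalars {A : ℝ → E →L[𝕜] F} {A' : E →L[𝕜] F}
    {u : ℝ → E} {u' : E} {x : ℝ} (hA : HasDerivAt A A' x) (hu : HasDerivAt u u' x) :
    HasDerivAt (fun t => A t (u t)) (A' (u x) + A x u') x :=
  ((ContinuousLinearMap.restrictScalarsL 𝕜 E F ℝ ℝ).hasFDerivAt.comp_hasDerivAt x hA).clm_apply hu

end Calculus

section EigenPath

variable {E : Type*} [NormedAddCommGroup E] [InnerProductSpace ℂ E]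
  {A : ℝ → E →L[ℂ] E} {A' : E →L[ℂ] E} {u : ℝ → E} {u' : E} {g : ℝ → ℝ} {g' : ℝ} {a b x : ℝ}

theorem HasDerivAt.inner_clm_apply (hu : HasDerivAt u u' x) (hA : HasDerivAt A A' x) :
    HasDerivAt (fun t => ⟪u t, A t (u t)⟫_ℂ)
      (⟪u', A x (u x)⟫_ℂ + ⟪u x, A' (u x) + A x u'⟫_ℂ) x := by
  rw [add_comm]
  exact hu.inner ℂ (hA.clm_apply_restrictScalars hu)

theorem eigen_equation_deriv (hab : a < b) (hx : x ∈ Icc a b)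
    (heig : ∀ t ∈ Icc a b, A t (u t) = (g t : ℂ) • u t)
    (hA : HasDerivAt A A' x) (hu : HasDerivAt u u' x) (hg : HasDerivAt g g' x) :
    A' (u x) + A x u' = (g' : ℂ) • u x + (g x : ℂ) • u' := by
  rw [add_comm ((g' : ℂ) • u x)]
  exact HasDerivAt.eq_of_eqOn_Icc hab hx heig (hA.clm_apply_restrictScalars hu)
    (hg.ofReal_comp.smul hu)

end EigenPath

section InnerProductSpace

variable {𝕜 E : Type*} [RCLike 𝕜] [NormedAddCommGroup E] [InnerProductSpace 𝕜 E]

theorem norm_inner_apply_le (T : E →L[𝕜] E) (x y : E) : ‖⟪x, T y⟫_𝕜‖ ≤ ‖T‖ * ‖x‖ * ‖y‖ :=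
  calc ‖⟪x, T y⟫_𝕜‖ ≤ ‖x‖ * ‖T y‖ := norm_inner_le_norm _ _
    _ ≤ ‖x‖ * (‖T‖ * ‖y‖) := by gcongr; exact T.le_opNorm y
    _ = ‖T‖ * ‖x‖ * ‖y‖ := by ring

theorem norm_inner_second_deriv_le (B C : E →L[𝕜] E) {ψ ψ' : E} (hψ : ‖ψ‖ = 1) :
    ‖⟪ψ', B ψ⟫_𝕜 + ⟪ψ, C ψ + B ψ'⟫_𝕜‖ ≤ ‖C‖ + 2 * ‖B‖ * ‖ψ'‖ := by
  rw [inner_add_right]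
  calc _ ≤ ‖⟪ψ', B ψ⟫_𝕜‖ + (‖⟪ψ, C ψ⟫_𝕜‖ + ‖⟪ψ, B ψ'⟫_𝕜‖) :=
        (norm_add_le _ _).trans (by gcongr; exact norm_add_le _ _)
    _ ≤ ‖B‖ * ‖ψ'‖ * ‖ψ‖ + (‖C‖ * ‖ψ‖ * ‖ψ‖ + ‖B‖ * ‖ψ‖ * ‖ψ'‖) := by
        gcongr <;> exact norm_inner_apply_le _ _ _
    _ = ‖C‖ + 2 * ‖B‖ * ‖ψ'‖ := by rw [hψ]; ring

theorem mem_orthogonal_eigenspace_of_inner_eq_zero {T : E →ₗ[𝕜] E} {γ : 𝕜} {ψ ψ' : E}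
    (hspan : ∀ v, T v = γ • v → ∃ c : 𝕜, v = c • ψ) (hψ' : ⟪ψ', ψ⟫_𝕜 = 0) :
    ψ' ∈ (eigenspace T γ)ᗮ := by
  refine (Submodule.mem_orthogonal _ _).2 fun u hu => ?_
  obtain ⟨c, rfl⟩ := hspan u (mem_eigenspace_iff.1 hu)
  rw [inner_smul_left, inner_eq_zero_symm.1 hψ', mul_zero]

namespace LinearMap.IsSymmetric

variable {T : E →ₗ[𝕜] E}

theorem hellmann_feynman (hT : T.IsSymmetric) {γ γ' : ℝ} {ψ ψ' w : E} (hψ : ‖ψ‖ = 1)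
    (heig : T ψ = (γ : 𝕜) • ψ) (hderiv : w + T ψ' = (γ' : 𝕜) • ψ + (γ : 𝕜) • ψ') :
    (γ' : 𝕜) = ⟪ψ, w⟫_𝕜 := by
  have hself : ⟪ψ, T ψ'⟫_𝕜 = (γ : 𝕜) * ⟪ψ, ψ'⟫_𝕜 := by
    rw [← hT, heig, inner_smul_left, RCLike.conj_ofReal]
  have h := congrArg (fun v => ⟪ψ, v⟫_𝕜) hderiv
  simp only [inner_add_right, inner_smul_right, hself, inner_self_eq_norm_sq_to_K, hψ] at h
  simpa using h.symm

theorem mul_norm_le_norm_apply_sub_smul [FiniteDimensional 𝕜 E] (hT : T.IsSymmetric)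
    {γ : 𝕜} {lam : ℝ} (hlam : 0 ≤ lam)
    (hgap : ∀ μ : 𝕜, HasEigenvalue T μ → μ ≠ γ → lam ≤ ‖μ - γ‖)
    {v : E} (hv : v ∈ (eigenspace T γ)ᗮ) : lam * ‖v‖ ≤ ‖T v - γ • v‖ := by
  set b := hT.eigenvectorBasis rfl
  have hcoeff : ∀ j, lam * ‖⟪b j, v⟫_𝕜‖ ≤ ‖⟪b j, T v - γ • v⟫_𝕜‖ := by
    intro j
    have hbj := hT.hasEigenvector_eigenvectorBasis rfl j
    have hinner : ⟪b j, T v - γ • v⟫_𝕜 = ((hT.eigenvalues rfl j : 𝕜) - γ) * ⟪b j, v⟫_𝕜 := by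
      rw [inner_sub_right, inner_smul_right, ← hT, hT.apply_eigenvectorBasis, inner_smul_left,
        RCLike.conj_ofReal, sub_mul]
    rw [hinner, norm_mul]
    by_cases hμ : (hT.eigenvalues rfl j : 𝕜) = γ
    · have hmem : b j ∈ eigenspace T γ := hμ ▸ hbj.1
      simp [Submodule.inner_right_of_mem_orthogonal hmem hv]
    · exact mul_le_mul_of_nonneg_right (hgap _ (hasEigenvalue_of_hasEigenvector hbj) hμ)
        (norm_nonneg _)
  have hsq : (lam * ‖v‖) ^ 2 ≤ ‖T v - γ • v‖ ^ 2 := by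
    rw [mul_pow, ← b.sum_sq_norm_inner_right v, ← b.sum_sq_norm_inner_right, Finset.mul_sum]
    gcongr with j
    rw [← mul_pow]
    exact pow_le_pow_left₀ (by positivity) (hcoeff j) 2
  exact (pow_le_pow_iff_left₀ (by positivity) (norm_nonneg _) two_ne_zero).1 hsq

theorem mul_norm_eigenvector_deriv_le [FiniteDimensional 𝕜 E]
    (hT : T.IsSymmetric) (T' : E →L[𝕜] E) {γ γ' lam : ℝ} (hlam : 0 ≤ lam)
    (hgap : ∀ μ : 𝕜, HasEigenvalue T μ → μ ≠ γ → lam ≤ ‖μ - γ‖)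
    {ψ ψ' : E} (hψ : ‖ψ‖ = 1) (heig : T ψ = (γ : 𝕜) • ψ)
    (hderiv : T' ψ + T ψ' = (γ' : 𝕜) • ψ + (γ : 𝕜) • ψ')
    (hψ' : ψ' ∈ (eigenspace T (γ : 𝕜))ᗮ) : lam * ‖ψ'‖ ≤ 2 * ‖T'‖ := by
  have hγ' : ‖(γ' : 𝕜)‖ ≤ ‖T'‖ := by
    simpa [hT.hellmann_feynman hψ heig hderiv, hψ] using norm_inner_apply_le T' ψ ψ
  have hres : T ψ' - (γ : 𝕜) • ψ' = (γ' : 𝕜) • ψ - T' ψ := by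
    linear_combination (norm := module) hderiv
  calc lam * ‖ψ'‖ ≤ ‖T ψ' - (γ : 𝕜) • ψ'‖ := hT.mul_norm_le_norm_apply_sub_smul hlam hgap hψ'
    _ ≤ ‖(γ' : 𝕜)‖ * ‖ψ‖ + ‖T'‖ * ‖ψ‖ := by
      rw [hres, ← norm_smul]
      exact (norm_sub_le _ _).trans (by gcongr; exact T'.le_opNorm ψ)
    _ ≤ 2 * ‖T'‖ := by rw [hψ]; linarith

end LinearMap.IsSymmetric

end InnerProductSpace

theorem isSymmetric_opCLM {d : ℕ} {A : Matrix (Fin d) (Fin d) ℂ} (hA : A.IsHermitian) :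
    (opCLM A).toLinearMap.IsSymmetric := by
  rw [opCLM, Matrix.coe_toEuclideanCLM_eq_toEuclideanLin]
  exact Matrix.isSymmetric_toEuclideanLin_iff.2 hA

theorem eigenvalue_second_deriv_bound_general {d : ℕ}
    (lam M₁ M₂ : ℝ) (hlam : 0 < lam) (hM₁ : 0 ≤ M₁)
    (H H' H'' : ℝ → Matrix (Fin d) (Fin d) ℂ)
    (hHd1 : ∀ s ∈ Set.Icc (0:ℝ) 1, HasDerivAt (fun t => opCLM (H t)) (opCLM (H' s)) s)
    (hHd2 : ∀ s ∈ Set.Icc (0:ℝ) 1, HasDerivAt (fun t => opCLM (H' t)) (opCLM (H'' s)) s)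
    (hherm : ∀ s ∈ Set.Icc (0:ℝ) 1, (H s).IsHermitian)
    (hM₁b : ∀ s ∈ Set.Icc (0:ℝ) 1, ‖opCLM (H' s)‖ ≤ M₁)
    (hM₂b : ∀ s ∈ Set.Icc (0:ℝ) 1, ‖opCLM (H'' s)‖ ≤ M₂)
    (Ψ Ψ' : ℝ → EuclideanSpace ℂ (Fin d))
    (hΨd1 : ∀ s ∈ Set.Icc (0:ℝ) 1, HasDerivAt Ψ (Ψ' s) s)
    (hΨnorm : ∀ s ∈ Set.Icc (0:ℝ) 1, ‖Ψ s‖ = 1)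
    (hphase : ∀ s ∈ Set.Icc (0:ℝ) 1, ⟪Ψ' s, Ψ s⟫_ℂ = 0)
    (γ γ' γ'' : ℝ → ℝ)
    (hγd1 : ∀ s ∈ Set.Icc (0:ℝ) 1, HasDerivAt γ (γ' s) s)
    (hγd2 : ∀ s ∈ Set.Icc (0:ℝ) 1, HasDerivAt γ' (γ'' s) s)
    (heig : ∀ s ∈ Set.Icc (0:ℝ) 1, opCLM (H s) (Ψ s) = (γ s : ℂ) • Ψ s)
    (heigspace : ∀ s ∈ Set.Icc (0:ℝ) 1, ∀ v : EuclideanSpace ℂ (Fin d),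
      opCLM (H s) v = (γ s : ℂ) • v → ∃ c : ℂ, v = c • Ψ s)
    (hgap : ∀ s ∈ Set.Icc (0:ℝ) 1, ∀ (μ : ℂ) (v : EuclideanSpace ℂ (Fin d)), v ≠ 0 →
      opCLM (H s) v = μ • v → μ ≠ (γ s : ℂ) → lam ≤ ‖μ - (γ s : ℂ)‖) :
    ∀ s ∈ Set.Icc (0:ℝ) 1, |γ'' s| ≤ M₂ + 4 * M₁ ^ 2 / lam := by
  have hderiv (s) (hs : s ∈ Icc (0:ℝ) 1) :
      opCLM (H' s) (Ψ s) + opCLM (H s) (Ψ' s) = (γ' s : ℂ) • Ψ s + (γ s : ℂ) • Ψ' s :=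
    eigen_equation_deriv one_pos hs heig (hHd1 s hs) (hΨd1 s hs) (hγd1 s hs)
  have hsymm (s) (hs : s ∈ Icc (0:ℝ) 1) := isSymmetric_opCLM (hherm s hs)
  have hfirst : EqOn (fun t => (γ' t : ℂ)) (fun t => ⟪Ψ t, opCLM (H' t) (Ψ t)⟫_ℂ) (Icc 0 1) :=
    fun s hs => (hsymm s hs).hellmann_feynman (hΨnorm s hs) (heig s hs) (hderiv s hs)
  intro s hs
  have hperp := mem_orthogonal_eigenspace_of_inner_eq_zero (heigspace s hs) (hphase s hs)
  have hgap' (μ : ℂ) (hμ : HasEigenvalue (opCLM (H s)).toLinearMap μ) (hne : μ ≠ γ s) :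
      lam ≤ ‖μ - γ s‖ :=
    let ⟨v, hv⟩ := hμ.exists_hasEigenvector
    hgap s hs μ v hv.2 (mem_eigenspace_iff.1 hv.1) hne
  have hΨ' : ‖Ψ' s‖ ≤ 2 * M₁ / lam := by
    rw [le_div_iff₀' hlam]
    exact ((hsymm s hs).mul_norm_eigenvector_deriv_le _ hlam.le hgap' (hΨnorm s hs) (heig s hs)
      (hderiv s hs) hperp).trans (by linarith [hM₁b s hs])
  have hsecond := HasDerivAt.eq_of_eqOn_Icc one_pos hs hfirst (hγd2 s hs).ofReal_comp
    ((hΨd1 s hs).inner_clm_apply (hHd2 s hs))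
  calc |γ'' s| = ‖(γ'' s : ℂ)‖ := (Complex.norm_real _).symm
    _ ≤ ‖opCLM (H'' s)‖ + 2 * ‖opCLM (H' s)‖ * ‖Ψ' s‖ := by
      rw [hsecond]; exact norm_inner_second_deriv_le _ _ (hΨnorm s hs)
    _ ≤ M₂ + 2 * M₁ * (2 * M₁ / lam) := by gcongr; exacts [hM₂b s hs, hM₁b s hs]
    _ = M₂ + 4 * M₁ ^ 2 / lam := by ring

/-- **Second derivative bound for the eigenvalue.** -/
theorem eigenvalue_second_deriv_bound {d : ℕ} (hd : 1 ≤ d)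
    (lam M₁ M₂ : ℝ) (hlam : 0 < lam) (hM₁ : 0 ≤ M₁) (hM₂ : 0 ≤ M₂)
    (H H' H'' : ℝ → Matrix (Fin d) (Fin d) ℂ)
    (hHd1 : ∀ s ∈ Set.Icc (0:ℝ) 1, HasDerivAt (fun t => opCLM (H t)) (opCLM (H' s)) s)
    (hHd2 : ∀ s ∈ Set.Icc (0:ℝ) 1, HasDerivAt (fun t => opCLM (H' t)) (opCLM (H'' s)) s)
    (hherm : ∀ s ∈ Set.Icc (0:ℝ) 1, (H s).IsHermitian)
    (hM₁b : ∀ s ∈ Set.Icc (0:ℝ) 1, ‖opCLM (H' s)‖ ≤ M₁)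
    (hM₂b : ∀ s ∈ Set.Icc (0:ℝ) 1, ‖opCLM (H'' s)‖ ≤ M₂)
    (Ψ Ψ' Ψ'' : ℝ → EuclideanSpace ℂ (Fin d))
    (hΨd1 : ∀ s ∈ Set.Icc (0:ℝ) 1, HasDerivAt Ψ (Ψ' s) s)
    (hΨd2 : ∀ s ∈ Set.Icc (0:ℝ) 1, HasDerivAt Ψ' (Ψ'' s) s)
    (hΨnorm : ∀ s ∈ Set.Icc (0:ℝ) 1, ‖Ψ s‖ = 1)
    (hphase : ∀ s ∈ Set.Icc (0:ℝ) 1, ⟪Ψ' s, Ψ s⟫_ℂ = 0)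
    (γ γ' γ'' : ℝ → ℝ)
    (hγd1 : ∀ s ∈ Set.Icc (0:ℝ) 1, HasDerivAt γ (γ' s) s)
    (hγd2 : ∀ s ∈ Set.Icc (0:ℝ) 1, HasDerivAt γ' (γ'' s) s)
    (heig : ∀ s ∈ Set.Icc (0:ℝ) 1, opCLM (H s) (Ψ s) = (γ s : ℂ) • Ψ s)
    (heigspace : ∀ s ∈ Set.Icc (0:ℝ) 1, ∀ v : EuclideanSpace ℂ (Fin d),
      opCLM (H s) v = (γ s : ℂ) • v → ∃ c : ℂ, v = c • Ψ s)
    (hgap : ∀ s ∈ Set.Icc (0:ℝ) 1, ∀ (μ : ℂ) (v : EuclideanSpace ℂ (Fin d)), v ≠ 0 →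
      opCLM (H s) v = μ • v → μ ≠ (γ s : ℂ) → lam ≤ ‖μ - (γ s : ℂ)‖) :
    ∀ s ∈ Set.Icc (0:ℝ) 1, |γ'' s| ≤ M₂ + 4 * M₁ ^ 2 / lam :=
  eigenvalue_second_deriv_bound_general lam M₁ M₂ hlam hM₁ H H' H'' hHd1 hHd2 hherm hM₁b hM₂b Ψ Ψ'
    hΨd1 hΨnorm hphase γ γ' γ'' hγd1 hγd2 heig heigspace hgap
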